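/- If g′ is obtained from a graph map g by collapsing an edge e with trivial image g(e) = ·, i.e., deleting e from G and removing all occurrences of e from all image paths, and H is an invariant subgraph, then ‖(g′)ⁿ‖_H = ‖gⁿ‖_H for all n when e ∉ H, and ‖(g′)ⁿ‖_H ≤ ‖gⁿ‖_H for all n when e ∈ H. -/
import Mathlib

def pathIter {E : Type} (g : E → List E) (n : ℕ) (l : List E) : List E :=
  (fun l => l.flatMap g)^[n] l

def hlen {E : Type} (H : E → Bool) (l : List E) : ℕ := l.countP H

def hnormIter {E : Type} [Fintype E] (g : E → List E) (H : E → Bool) (n : ℕ) : ℕ :=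
  ∑ e : E, hlen H (pathIter g n [e])

def fcol {E : Type} [DecidableEq E] (e₀ : E) : E → Option {e : E // e ≠ e₀} :=
  fun x => if h : x = e₀ then none else some ⟨x, h⟩

def gcol {E : Type} [DecidableEq E] (g : E → List E) (e₀ : E) :
    {e : E // e ≠ e₀} → List {e : E // e ≠ e₀} :=
  fun e => (g e.val).filterMap (fcol e₀)

section aux
variable {E : Type} [DecidableEq E] (g : E → List E) (e₀ : E)

lemma aux_flatMap (h₀ : g e₀ = []) (l : List E) :
    (l.flatMap g).filterMap (fcol e₀) = (l.filterMap (fcol e₀)).flatMap (gcol g e₀) := by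
  induction l with
  | nil => simp
  | cons a l ih =>
    by_cases ha : a = e₀
    · subst ha
      simp [List.flatMap_cons, List.filterMap_append, h₀, ih, fcol]
    · simp [List.flatMap_cons, List.filterMap_append, ha, ih, fcol, gcol]

lemma aux_commute (h₀ : g e₀ = []) (n : ℕ) (l : List E) :
    pathIter (gcol g e₀) n (l.filterMap (fcol e₀)) = (pathIter g n l).filterMap (fcol e₀) := by
  induction n generalizing l with
  | zero => simp [pathIter]
  | succ n ih =>
    simp only [pathIter, Function.iterate_succ_apply] at *
    rw [← aux_flatMap g e₀ h₀, ih]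

lemma aux_map_val (l : List E) :
    (l.filterMap (fcol e₀)).map Subtype.val = l.filter (fun x => x ≠ e₀) := by
  induction l with
  | nil => simp
  | cons a l ih =>
    by_cases ha : a = e₀ <;> simp [ha, ih, fcol]

end aux

/-- Collapsing an edge `e₀` with trivial image (deleting it from the graph and removing all
its occurrences from image paths) preserves all `H`-norms if `e₀ ∉ H`, and does not increase
them if `e₀ ∈ H`. -/
theorem stmt4 {E : Type} [Fintype E] [DecidableEq E] (g : E → List E) (H : E → Bool)
    (e₀ : E) (h₀ : g e₀ = []) :
    (H e₀ = false → ∀ n : ℕ,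
      hnormIter (fun e : {e : E // e ≠ e₀} =>
          (g e.val).filterMap (fun x => if h : x = e₀ then none else some ⟨x, h⟩))
        (fun e => H e.val) n = hnormIter g H n) ∧
    (H e₀ = true → ∀ n : ℕ,
      hnormIter (fun e : {e : E // e ≠ e₀} =>
          (g e.val).filterMap (fun x => if h : x = e₀ then none else some ⟨x, h⟩))
        (fun e => H e.val) n ≤ hnormIter g H n) := by
  have hgg : (fun e : {e : E // e ≠ e₀} =>
      (g e.val).filterMap (fun x => if h : x = e₀ then none else some ⟨x, h⟩)) = gcol g e₀ := rfl
  rw [hgg]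
  have key : ∀ (n : ℕ) (e : E) (he : e ≠ e₀),
      hlen (fun x => H x.val) (pathIter (gcol g e₀) n [⟨e, he⟩]) =
        (pathIter g n [e]).countP (fun a => H a && decide (a ≠ e₀)) := by
    intro n e he
    have h1 : ([e].filterMap (fcol e₀)) = [(⟨e, he⟩ : {e : E // e ≠ e₀})] := by
      simp [fcol, he]
    rw [← h1, aux_commute g e₀ h₀, hlen]
    calc ((pathIter g n [e]).filterMap (fcol e₀)).countP (fun x => H x.val)
        = (((pathIter g n [e]).filterMap (fcol e₀)).map Subtype.val).countP H := by
          rw [List.countP_map]; rfl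
      _ = ((pathIter g n [e]).filter (fun x => x ≠ e₀)).countP H := by
          rw [aux_map_val]
      _ = (pathIter g n [e]).countP (fun a => H a && decide (a ≠ e₀)) := by
          rw [List.countP_filter]
  have key0 : ∀ n : ℕ, hlen H (pathIter g n [e₀]) =
      if n = 0 then (if H e₀ then 1 else 0) else 0 := by
    intro n
    cases n with
    | zero => simp [pathIter, hlen, List.countP_cons]
    | succ n =>
      have hnil : (fun l : List E => l.flatMap g)^[n] [] = [] :=
        Function.iterate_fixed (by simp) n
      have : pathIter g (n+1) [e₀] = [] := by
        simp [pathIter, Function.iterate_succ_apply, h₀, hnil]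
      simp [this, hlen]
  have hsum : ∀ F : E → ℕ,
      (∑ e : {e : E // e ≠ e₀}, F e.val) = ∑ e ∈ Finset.univ.erase e₀, F e := by
    intro F
    exact (Finset.sum_subtype (p := fun x => x ≠ e₀) (Finset.univ.erase e₀)
      (fun x => by simp [Finset.mem_erase]) (fun e => F e)).symm
  constructor
  · intro hH n
    have hcong : (fun a => H a && decide (a ≠ e₀)) = H := by
      funext a
      by_cases ha : a = e₀ <;> simp [ha, hH]
    unfold hnormIter
    have step : (∑ e : {e : E // e ≠ e₀}, hlen (fun x => H x.val) (pathIter (gcol g e₀) n [e]))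
        = ∑ e ∈ Finset.univ.erase e₀, hlen H (pathIter g n [e]) := by
      rw [show (∑ e : {e : E // e ≠ e₀}, hlen (fun x => H x.val) (pathIter (gcol g e₀) n [e]))
          = ∑ e : {e : E // e ≠ e₀}, hlen H (pathIter g n [e.val]) from
        Finset.sum_congr rfl (fun e _ => by
          rw [show (e : {e : E // e ≠ e₀}) = ⟨e.val, e.prop⟩ from rfl, key n e.val e.prop,
            hcong]; rfl)]
      exact hsum (fun e => hlen H (pathIter g n [e]))
    rw [step, ← Finset.add_sum_erase _ _ (Finset.mem_univ e₀), key0 n]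
    cases n <;> simp [hH]
  · intro hH n
    unfold hnormIter
    have step : (∑ e : {e : E // e ≠ e₀}, hlen (fun x => H x.val) (pathIter (gcol g e₀) n [e]))
        ≤ ∑ e ∈ Finset.univ.erase e₀, hlen H (pathIter g n [e]) := by
      rw [show (∑ e : {e : E // e ≠ e₀}, hlen (fun x => H x.val) (pathIter (gcol g e₀) n [e]))
          = ∑ e : {e : E // e ≠ e₀},
              (pathIter g n [e.val]).countP (fun a => H a && decide (a ≠ e₀)) from
        Finset.sum_congr rfl (fun e _ => by
          rw [show (e : {e : E // e ≠ e₀}) = ⟨e.val, e.prop⟩ from rfl, key n e.val e.prop])]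
      rw [hsum (fun e => (pathIter g n [e]).countP (fun a => H a && decide (a ≠ e₀)))]
      apply Finset.sum_le_sum
      intro e _
      exact List.countP_mono_left (fun a _ h => by simpa using (Bool.and_elim_left h))
    calc _ ≤ ∑ e ∈ Finset.univ.erase e₀, hlen H (pathIter g n [e]) := step
      _ ≤ ∑ e : E, hlen H (pathIter g n [e]) :=
        Finset.sum_le_sum_of_subset (Finset.erase_subset _ _)
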